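/- arXiv:1801.02572 — 8 statements merged into one kernel-verified Lean document; each statement's English description precedes it below -/
import Mathlib

section
/- For every real number x that is not an integer multiple of π, the minimum over θ ∈ (-π, π] of (cos θ - cos x)/sin x equals -tan(⌈x/π⌉·π/2 - x/2), and this value is nonpositive. -/
open Real

theorem stmt_1 (x : ℝ) (hx : ∀ m : ℤ, x ≠ m * π) :
    IsLeast ((fun θ : ℝ => (Real.cos θ - Real.cos x) / Real.sin x) '' Set.Ioc (-π) π)
      (-Real.tan ((⌈x / π⌉ : ℝ) * π / 2 - x / 2)) ∧
    -Real.tan ((⌈x / π⌉ : ℝ) * π / 2 - x / 2) ≤ 0 := by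
  have hπ : (0:ℝ) < π := Real.pi_pos
  set n : ℤ := ⌈x / π⌉ with hn
  have h1 : ((n:ℝ) - 1) * π < x := by
    have h : ((n:ℝ)) < x / π + 1 := by exact_mod_cast Int.ceil_lt_add_one (x / π)
    have : ((n:ℝ) - 1) * π < (x / π) * π := by nlinarith
    calc ((n:ℝ) - 1) * π < (x / π) * π := this
      _ = x := by field_simp
  have h2 : x < (n:ℝ) * π := by
    have hle : x / π ≤ (n:ℝ) := Int.le_ceil _
    have hle' : x ≤ (n:ℝ) * π := by
      calc x = (x / π) * π := by field_simp
        _ ≤ (n:ℝ) * π := by nlinarith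
    rcases lt_or_eq_of_le hle' with h | h
    · exact h
    · exact absurd h (hx n)
  have hs2 : Real.sin x = 2 * Real.sin (x/2) * Real.cos (x/2) := by
    have := Real.sin_two_mul (x/2)
    rw [show 2 * (x/2) = x by ring] at this
    linarith
  have hc2 : Real.cos x = 2 * Real.cos (x/2)^2 - 1 := by
    have := Real.cos_two_mul (x/2)
    rw [show 2 * (x/2) = x by ring] at this
    linarith
  have hc2' : Real.cos x = 1 - 2 * Real.sin (x/2)^2 := by
    have hpyth := Real.sin_sq_add_cos_sq (x/2)
    nlinarith
  rcases Int.even_or_odd n with ⟨k, hk⟩ | ⟨k, hk⟩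
  · -- n = 2k even, sin x < 0, min at θ = 0
    have hsin : Real.sin x < 0 := by
      have hper : Real.sin (x - k * (2*π)) = Real.sin x :=
        (Real.sin_periodic.int_mul k).sub_eq x
      have hb1 : -π < x - k * (2*π) := by
        push_cast [hk] at h1 ⊢; nlinarith
      have hb2 : x - k * (2*π) < 0 := by
        push_cast [hk] at h2 ⊢; nlinarith
      have := Real.sin_neg_of_neg_of_neg_pi_lt hb2 hb1
      linarith
    have hcne : Real.cos (x/2) ≠ 0 := by
      intro h; rw [h] at hs2; simp at hs2; linarith
    have hsne : Real.sin (x/2) ≠ 0 := by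
      intro h; rw [h] at hs2; simp at hs2; linarith
    have htan : -Real.tan ((n:ℝ) * π / 2 - x / 2) = Real.tan (x/2) := by
      have : ((n:ℝ) * π / 2 - x / 2) = (-(x/2)) + k * π := by
        push_cast [hk]; ring
      rw [this, Real.tan_add_int_mul_pi, Real.tan_neg, neg_neg]
    have hval : Real.tan (x/2) = (Real.cos 0 - Real.cos x) / Real.sin x := by
      rw [Real.tan_eq_sin_div_cos, Real.cos_zero, hc2', hs2]
      field_simp
      ring
    constructor
    · constructor
      · refine ⟨0, ⟨by linarith, by linarith⟩, ?_⟩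
        simp only [htan, hval]
      · rintro y ⟨θ, hθ, rfl⟩
        rw [htan, hval]
        simp only
        rw [div_le_div_right_of_neg hsin]
        have := Real.cos_le_one θ
        rw [Real.cos_zero]
        linarith
    · rw [htan, hval]
      apply div_nonpos_of_nonneg_of_nonpos
      · have := Real.cos_le_one x; simp; linarith
      · linarith
  · -- n = 2k+1 odd, sin x > 0, min at θ = π
    have hsin : 0 < Real.sin x := by
      have hper : Real.sin (x - k * (2*π)) = Real.sin x :=
        (Real.sin_periodic.int_mul k).sub_eq x
      have hb1 : 0 < x - k * (2*π) := by
        push_cast [hk] at h1 ⊢; nlinarith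
      have hb2 : x - k * (2*π) < π := by
        push_cast [hk] at h2 ⊢; nlinarith
      have := Real.sin_pos_of_pos_of_lt_pi hb1 hb2
      linarith
    have hcne : Real.cos (x/2) ≠ 0 := by
      intro h; rw [h] at hs2; simp at hs2; linarith
    have hsne : Real.sin (x/2) ≠ 0 := by
      intro h; rw [h] at hs2; simp at hs2; linarith
    have htan : -Real.tan ((n:ℝ) * π / 2 - x / 2) = -(Real.cos (x/2) / Real.sin (x/2)) := by
      have : ((n:ℝ) * π / 2 - x / 2) = (π/2 - x/2) + k * π := by
        push_cast [hk]; ring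
      rw [this, Real.tan_add_int_mul_pi, Real.tan_eq_sin_div_cos,
        Real.sin_pi_div_two_sub, Real.cos_pi_div_two_sub]
    have hval : -(Real.cos (x/2) / Real.sin (x/2)) = (Real.cos π - Real.cos x) / Real.sin x := by
      rw [Real.cos_pi, hc2, hs2]
      field_simp
      ring
    constructor
    · constructor
      · refine ⟨π, ⟨by linarith, le_refl _⟩, ?_⟩
        simp only [htan, hval]
      · rintro y ⟨θ, hθ, rfl⟩
        rw [htan, hval]
        simp only
        have h9 : Real.cos π - Real.cos x ≤ Real.cos θ - Real.cos x := by
          have := Real.neg_one_le_cos θ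
          rw [Real.cos_pi]; linarith
        exact div_le_div_of_nonneg_right h9 hsin.le
    · rw [htan, hval]
      apply div_nonpos_of_nonpos_of_nonneg
      · have := Real.neg_one_le_cos x; rw [Real.cos_pi]; linarith
      · linarith
end

section
/- The function F(k) = 2k · Σ_{j=1}^d tan((π/2)(k·a_j/π - ⌊k·a_j/π⌋)) is strictly increasing on each interval of continuity, i.e., on each interval of positive reals containing no point of the form mπ/a_j with m a positive integer and j ∈ {1,…,d}. -/
open Real

theorem stmt_2 (d : ℕ) (hd : 1 ≤ d) (a : Fin d → ℝ) (ha : ∀ j, 0 < a j)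
    (F : ℝ → ℝ)
    (hF : ∀ k, F k = 2 * k * ∑ j : Fin d,
      Real.tan (π / 2 * (k * a j / π - (⌊k * a j / π⌋ : ℝ))))
    (I : Set ℝ) (hI : I ⊆ Set.Ioi 0) (hI' : I.OrdConnected)
    (hcont : ∀ k ∈ I, ∀ m : ℕ, 0 < m → ∀ j : Fin d, k ≠ (m : ℝ) * π / a j) :
    StrictMonoOn F I := by
  have hπ : (0:ℝ) < π := Real.pi_pos
  intro x hx y hy hxy
  have hx0 : 0 < x := hI hx
  have hy0 : 0 < y := hI hy
  -- no integer m ≥ 1 has mπ/a j in I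
  have key : ∀ j : Fin d, (⌊x * a j / π⌋ : ℤ) = ⌊y * a j / π⌋ := by
    intro j
    have haj := ha j
    have hle : (⌊x * a j / π⌋ : ℤ) ≤ ⌊y * a j / π⌋ := by
      apply Int.floor_le_floor
      gcongr
    by_contra hne
    have hlt : (⌊x * a j / π⌋ : ℤ) < ⌊y * a j / π⌋ := lt_of_le_of_ne hle hne
    set m : ℤ := ⌊y * a j / π⌋ with hm
    have hm1 : 1 ≤ m := by
      have h0 : (0:ℤ) ≤ ⌊x * a j / π⌋ := by
        apply Int.floor_nonneg.2
        positivity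
      omega
    have hmx : x * a j / π < (m : ℝ) := by
      have := Int.lt_floor_add_one (x * a j / π)
      have : x * a j / π < (⌊x * a j / π⌋ : ℝ) + 1 := this
      have hc : ((⌊x * a j / π⌋ : ℤ) : ℝ) + 1 ≤ (m : ℝ) := by
        exact_mod_cast hlt
      linarith
    have hmy : (m : ℝ) ≤ y * a j / π := Int.floor_le _
    set k : ℝ := (m : ℝ) * π / a j with hk
    have hxk : x < k := by
      rw [hk, lt_div_iff₀ haj]
      rw [div_lt_iff₀ hπ] at hmx
      linarith
    have hky : k ≤ y := by
      rw [hk, div_le_iff₀ haj]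
      rw [le_div_iff₀ hπ] at hmy
      linarith
    have hkI : k ∈ I := hI'.out hx hy ⟨hxk.le, hky⟩
    have := hcont k hkI m.toNat (by omega) j
    apply this
    rw [hk]
    congr 1
    congr 1
    exact_mod_cast (Int.toNat_of_nonneg (by omega)).symm
  -- per-term inequalities
  have main : ∀ j : Fin d,
      0 < Real.tan (π / 2 * (x * a j / π - (⌊x * a j / π⌋ : ℝ))) ∧
      Real.tan (π / 2 * (x * a j / π - (⌊x * a j / π⌋ : ℝ))) <
        Real.tan (π / 2 * (y * a j / π - (⌊y * a j / π⌋ : ℝ))) := by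
    intro j
    have haj := ha j
    set n : ℤ := ⌊x * a j / π⌋ with hn
    have hny : (⌊y * a j / π⌋ : ℤ) = n := (key j).symm
    set u : ℝ := π / 2 * (x * a j / π - (n : ℝ)) with hu
    set v : ℝ := π / 2 * (y * a j / π - (n : ℝ)) with hv
    have hfx : (n : ℝ) < x * a j / π := by
      rcases lt_or_eq_of_le (Int.floor_le (x * a j / π)) with h | h
      · exact h
      · exfalso
        have hn1 : 1 ≤ n := by
          have : 0 < x * a j / π := by positivity
          rw [← h] at this
          exact_mod_cast this
        have := hcont x hx n.toNat (by omega) j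
        apply this
        have : x * a j / π = (n : ℝ) := h.symm
        field_simp at this ⊢
        have hc : ((n.toNat : ℤ) : ℝ) = (n : ℝ) := by
          exact_mod_cast (Int.toNat_of_nonneg (by omega))
        push_cast at hc ⊢
        rw [hc]
        linarith
    have hu0 : 0 < u := by
      rw [hu]
      have : (0:ℝ) < x * a j / π - (n : ℝ) := by linarith
      positivity
    have huv : u < v := by
      rw [hu, hv]
      have h : x * a j / π < y * a j / π := by gcongr
      exact mul_lt_mul_of_pos_left (by linarith) (by positivity)
    have hv2 : v < π / 2 := by
      rw [hv]
      have := Int.lt_floor_add_one (y * a j / π)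
      rw [hny] at this
      push_cast at this
      have h1 : y * a j / π - (n : ℝ) < 1 := by linarith
      calc π / 2 * (y * a j / π - (n : ℝ)) < π / 2 * 1 := by
            apply mul_lt_mul_of_pos_left h1 (by positivity)
        _ = π / 2 := mul_one _
    rw [show ((⌊y * a j / π⌋ : ℤ) : ℝ) = (n : ℝ) from by exact_mod_cast hny]
    constructor
    · exact Real.tan_pos_of_pos_of_lt_pi_div_two hu0 (lt_trans huv hv2)
    · exact Real.tan_lt_tan_of_nonneg_of_lt_pi_div_two hu0.le hv2 huv
  rw [hF x, hF y]
  have hsum1 : 0 < ∑ j : Fin d, Real.tan (π / 2 * (x * a j / π - (⌊x * a j / π⌋ : ℝ))) := by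
    apply Finset.sum_pos (fun j _ => (main j).1)
    exact Finset.univ_nonempty_iff.2 (Fin.pos_iff_nonempty.mp hd)
  have hsum2 : ∑ j : Fin d, Real.tan (π / 2 * (x * a j / π - (⌊x * a j / π⌋ : ℝ))) ≤
      ∑ j : Fin d, Real.tan (π / 2 * (y * a j / π - (⌊y * a j / π⌋ : ℝ))) :=
    Finset.sum_le_sum (fun j _ => (main j).2.le)
  have h2x : 0 < 2 * x := by linarith
  calc 2 * x * ∑ j : Fin d, Real.tan (π / 2 * (x * a j / π - (⌊x * a j / π⌋ : ℝ)))
      < 2 * y * ∑ j : Fin d, Real.tan (π / 2 * (x * a j / π - (⌊x * a j / π⌋ : ℝ))) := by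
        apply mul_lt_mul_of_pos_right (by linarith) hsum1
    _ ≤ 2 * y * ∑ j : Fin d, Real.tan (π / 2 * (y * a j / π - (⌊y * a j / π⌋ : ℝ))) := by
        apply mul_le_mul_of_nonneg_left hsum2 (by linarith)
end

section
/- For every m ∈ ℕ and every j ∈ {1,…,d}, the limit of F(k) as k approaches mπ/a_j from the left is +∞, where F(k) = 2k Σ_{j=1}^d tan((π/2)(k a_j/π - ⌊k a_j/π⌋)). -/
/-! All summands of `F` are nonnegative, and as `k ↑ mπ/a_j` the `j`-th one blows up:
`fract (k a_j/π) ↑ 1`, so `tan (π/2 · fract (k a_j/π)) → +∞`, while `2k → 2mπ/a_j > 0`. -/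

open Real Filter Topology

lemma tan_pi_div_two_mul_fract_nonneg (x : ℝ) : 0 ≤ tan (π / 2 * Int.fract x) := by
  have h₀ := Int.fract_nonneg x
  have h₁ := Int.fract_lt_one x
  apply tan_nonneg_of_nonneg_of_le_pi_div_two <;> nlinarith [pi_pos]

lemma tendsto_tan_pi_div_two_mul_fract_nhdsLT_intCast (n : ℤ) :
    Tendsto (fun x : ℝ => tan (π / 2 * Int.fract x)) (𝓝[<] (n : ℝ)) atTop := by
  have h := TendstoNhdsWithinIio.const_mul (by positivity : (0 : ℝ) < π / 2)
    (tendsto_fract_left (α := ℝ) n)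
  rw [mul_one] at h
  exact tendsto_tan_pi_div_two.comp h

theorem stmt_3_general (d : ℕ) (a : Fin d → ℝ) (ha : ∀ j, 0 < a j)
    (F : ℝ → ℝ)
    (hF : ∀ k, F k = 2 * k * ∑ j : Fin d,
      Real.tan (π / 2 * (k * a j / π - (⌊k * a j / π⌋ : ℝ))))
    (m : ℕ) (hm : 0 < m) (j : Fin d) :
    Filter.Tendsto F (nhdsWithin ((m : ℝ) * π / a j) (Set.Iio ((m : ℝ) * π / a j)))
      Filter.atTop := by
  set c := (m : ℝ) * π / a j
  have hF' : F = fun k => 2 * k * ∑ i, tan (π / 2 * Int.fract (k * a i / π)) := by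
    funext k
    simp only [hF, Int.self_sub_floor]
  have hscale : Tendsto (fun k => k * a j / π) (𝓝[<] c) (𝓝[<] ((m : ℤ) : ℝ)) := by
    have h := TendstoNhdsWithinIio.mul_const (div_pos (ha j) pi_pos) (tendsto_id (x := 𝓝[<] c))
    have hc : c * (a j / π) = ((m : ℤ) : ℝ) := by
      simp only [c, Int.cast_natCast]
      field_simp [(ha j).ne', pi_pos.ne']
    simpa only [id, hc, mul_div_assoc] using h
  have hterm := (tendsto_tan_pi_div_two_mul_fract_nhdsLT_intCast m).comp hscale
  have hsum : Tendsto (fun k => ∑ i, tan (π / 2 * Int.fract (k * a i / π))) (𝓝[<] c) atTop :=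
    tendsto_atTop_mono (fun k => Finset.single_le_sum
      (fun i _ => tan_pi_div_two_mul_fract_nonneg _) (Finset.mem_univ j)) hterm
  have htwo : Tendsto (fun k : ℝ => 2 * k) (𝓝[<] c) (𝓝 (2 * c)) :=
    ((continuous_const_mul 2).tendsto c).mono_left nhdsWithin_le_nhds
  rw [hF']
  exact htwo.pos_mul_atTop (by have := ha j; positivity) hsum

theorem stmt_3 (d : ℕ) (hd : 1 ≤ d) (a : Fin d → ℝ) (ha : ∀ j, 0 < a j)
    (F : ℝ → ℝ)
    (hF : ∀ k, F k = 2 * k * ∑ j : Fin d,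
      Real.tan (π / 2 * (k * a j / π - (⌊k * a j / π⌋ : ℝ))))
    (m : ℕ) (hm : 0 < m) (j : Fin d) :
    Filter.Tendsto F (nhdsWithin ((m : ℝ) * π / a j) (Set.Iio ((m : ℝ) * π / a j)))
      Filter.atTop :=
  stmt_3_general d a ha F hF m hm j
end

section
/- For every irrational γ > 0, the Markov constant μ(γ) satisfies μ(γ) = min{υ(γ), υ(γ⁻¹)}, where μ(γ) = inf{c > 0 : |γ - p/q| < c/q² for infinitely many pairs (p,q) ∈ ℤ × ℕ} and υ(γ) = inf{c > 0 : 0 < γ - p/q < c/q² for infinitely many pairs (p,q) ∈ ℤ × ℕ}. -/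
/-!
For irrational `γ` no fraction equals `γ`, so a good approximation `p/q` lies strictly below or
strictly above `γ`, and `μ(γ)` is the smaller of the two one-sided infima: `υ(γ)` and the
corresponding infimum `υ⁺(γ)` for approximations from above. The substitution `p/q ↦ q/p` turns
approximations of `γ` from below into approximations of `γ⁻¹` from above: with `e = |qγ - p|`
the new error is `|pγ⁻¹ - q| = e/γ`, and `(e/γ)·p` differs from `e·q` by the factor `p/(qγ)`,
which tends to `1` (from below for lower approximations). Hence `υ⁺(γ) = υ(γ⁻¹)`. These infima
are not junk infima of empty sets, since each side has infinitely many approximations with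
constant `1`: Dirichlet's theorem yields coprime `p, q` with `|qγ - p|·q < 1`, and when `p/q` lies
above `γ` its Farey neighbour `p'/q'` with `pq' - p'q = 1`, `q' ≤ q`, lies below `γ` and is
again such an approximation.
-/

noncomputable def markov (γ : ℝ) : ℝ :=
  sInf {c : ℝ | 0 < c ∧
    {pq : ℤ × ℕ | 0 < pq.2 ∧ |γ - (pq.1 : ℝ) / (pq.2 : ℝ)| < c / (pq.2 : ℝ) ^ 2}.Infinite}

noncomputable def upsilon (γ : ℝ) : ℝ :=
  sInf {c : ℝ | 0 < c ∧
    {pq : ℤ × ℕ | 0 < pq.2 ∧ 0 < γ - (pq.1 : ℝ) / (pq.2 : ℝ) ∧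
      γ - (pq.1 : ℝ) / (pq.2 : ℝ) < c / (pq.2 : ℝ) ^ 2}.Infinite}

namespace MarkovConstant

open Set

def lowerApprox (γ c : ℝ) : Set (ℤ × ℕ) :=
  {pq | 0 < pq.2 ∧ 0 < pq.2 * γ - pq.1 ∧ (pq.2 * γ - pq.1) * pq.2 < c}

def upperApprox (γ c : ℝ) : Set (ℤ × ℕ) :=
  {pq | 0 < pq.2 ∧ 0 < pq.1 - pq.2 * γ ∧ (pq.1 - pq.2 * γ) * pq.2 < c}

def lowerConsts (γ : ℝ) : Set ℝ := {c | 0 < c ∧ (lowerApprox γ c).Infinite}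

def upperConsts (γ : ℝ) : Set ℝ := {c | 0 < c ∧ (upperApprox γ c).Infinite}

lemma bddBelow_lowerConsts (γ : ℝ) : BddBelow (lowerConsts γ) := ⟨0, fun _ hc => hc.1.le⟩

lemma bddBelow_upperConsts (γ : ℝ) : BddBelow (upperConsts γ) := ⟨0, fun _ hc => hc.1.le⟩

lemma sub_div_eq_mul_sub_div (γ : ℝ) (p : ℤ) {q : ℕ} (hq : 0 < q) :
    γ - p / q = (q * γ - p) / q := by
  field_simp

lemma div_lt_div_sq_iff {x c : ℝ} {q : ℕ} (hq : 0 < q) : x / q < c / (q : ℝ) ^ 2 ↔ x * q < c := by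
  have hq' : (0 : ℝ) < q := Nat.cast_pos.2 hq
  rw [div_lt_div_iff₀ hq' (by positivity), sq, ← mul_assoc, mul_lt_mul_iff_of_pos_right hq']

lemma abs_sub_div_lt_iff {γ c : ℝ} {p : ℤ} {q : ℕ} (hq : 0 < q) :
    |γ - p / q| < c / (q : ℝ) ^ 2 ↔ |q * γ - p| * q < c := by
  rw [sub_div_eq_mul_sub_div γ p hq, abs_div, Nat.abs_cast, div_lt_div_sq_iff hq]

lemma lowerApprox_eq (γ c : ℝ) : lowerApprox γ c =
    {pq : ℤ × ℕ | 0 < pq.2 ∧ 0 < γ - pq.1 / pq.2 ∧ γ - pq.1 / pq.2 < c / (pq.2 : ℝ) ^ 2} := by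
  ext ⟨p, q⟩
  refine ⟨fun ⟨hq, h₀, h₁⟩ => ⟨hq, ?_⟩, fun ⟨hq, h₀, h₁⟩ => ⟨hq, ?_⟩⟩ <;>
  · have hq' : (0 : ℝ) < q := Nat.cast_pos.2 hq
    dsimp only at *
    rw [sub_div_eq_mul_sub_div γ p hq, div_pos_iff_of_pos_right hq', div_lt_div_sq_iff hq] at *
    exact ⟨h₀, h₁⟩

lemma upsilon_eq (γ : ℝ) : upsilon γ = sInf (lowerConsts γ) := by
  simp only [upsilon, lowerConsts, lowerApprox_eq]

lemma setOf_abs_sub_div_lt_eq {γ : ℝ} (hγ : Irrational γ) (c : ℝ) :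
    {pq : ℤ × ℕ | 0 < pq.2 ∧ |γ - pq.1 / pq.2| < c / (pq.2 : ℝ) ^ 2} =
      lowerApprox γ c ∪ upperApprox γ c := by
  ext ⟨p, q⟩
  simp only [mem_ofPred_eq, mem_union, lowerApprox, upperApprox]
  refine ⟨fun ⟨hq, h⟩ => ?_, ?_⟩
  · rw [abs_sub_div_lt_iff hq] at h
    have hne : (q : ℝ) * γ - p ≠ 0 := sub_ne_zero.2 ((hγ.natCast_mul hq.ne').ne_int p)
    rcases hne.lt_or_gt with hneg | hpos
    · rw [abs_of_neg hneg] at h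
      exact Or.inr ⟨hq, by linarith, by linarith⟩
    · rw [abs_of_pos hpos] at h
      exact Or.inl ⟨hq, hpos, h⟩
  · rintro (⟨hq, h₀, h₁⟩ | ⟨hq, h₀, h₁⟩) <;> refine ⟨hq, (abs_sub_div_lt_iff hq).2 ?_⟩
    · rwa [abs_of_pos h₀]
    · rwa [abs_sub_comm, abs_of_pos h₀]

lemma markov_eq {γ : ℝ} (hγ : Irrational γ) : markov γ = sInf (lowerConsts γ ∪ upperConsts γ) := by
  simp only [markov, setOf_abs_sub_div_lt_eq hγ, lowerConsts, upperConsts, infinite_union,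
    and_or_left, ofPred_or]

lemma finite_setOf_abs_mul_sub_le (γ c : ℝ) (M : ℕ) :
    {pq : ℤ × ℕ | pq.2 ≤ M ∧ |pq.2 * γ - pq.1| ≤ c}.Finite := by
  set B : ℤ := ⌈M * |γ| + c⌉
  refine ((finite_Icc (-B) B).prod (finite_Iic M)).subset fun ⟨p, q⟩ ⟨hqM, h⟩ => ⟨?_, hqM⟩
  have hqγ : |(q : ℝ) * γ| ≤ M * |γ| := by
    rw [abs_mul, Nat.abs_cast]
    exact mul_le_mul_of_nonneg_right (Nat.cast_le.2 hqM) (abs_nonneg γ)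
  have hp : |(p : ℝ)| ≤ M * |γ| + c := by
    calc |(p : ℝ)| = |q * γ - (q * γ - p)| := by ring_nf
      _ ≤ |(q : ℝ) * γ| + |q * γ - p| := abs_sub _ _
      _ ≤ M * |γ| + c := add_le_add hqγ h
  rw [mem_Icc, ← abs_le, ← Int.cast_le (R := ℝ), Int.cast_abs]
  exact hp.trans (Int.le_ceil _)

lemma infinite_iff_forall_exists_lt_snd {γ c : ℝ} {S : Set (ℤ × ℕ)}
    (hS : ∀ pq ∈ S, |pq.2 * γ - pq.1| ≤ c) : S.Infinite ↔ ∀ M : ℕ, ∃ pq ∈ S, M < pq.2 := by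
  refine ⟨fun hinf M => ?_, fun h hfin => ?_⟩
  · by_contra! hM
    exact hinf ((finite_setOf_abs_mul_sub_le γ c M).subset fun pq hpq => ⟨hM pq hpq, hS pq hpq⟩)
  · obtain ⟨B, hB⟩ := (hfin.image Prod.snd).bddAbove
    obtain ⟨pq, hpq, hlt⟩ := h B
    exact (hB ⟨pq, hpq, rfl⟩).not_gt hlt

lemma lt_of_mul_natCast_lt {e c : ℝ} {q : ℕ} (hq : 0 < q) (he : 0 ≤ e) (h : e * q < c) :
    e < c :=
  (le_mul_of_one_le_right he (Nat.one_le_cast.2 hq)).trans_lt h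

lemma lowerApprox_infinite_iff {γ c : ℝ} :
    (lowerApprox γ c).Infinite ↔ ∀ M : ℕ, ∃ pq ∈ lowerApprox γ c, M < pq.2 :=
  infinite_iff_forall_exists_lt_snd fun _ ⟨hq, h₀, h₁⟩ =>
    (abs_of_pos h₀).trans_le (lt_of_mul_natCast_lt hq h₀.le h₁).le

lemma upperApprox_infinite_iff {γ c : ℝ} :
    (upperApprox γ c).Infinite ↔ ∀ M : ℕ, ∃ pq ∈ upperApprox γ c, M < pq.2 :=
  infinite_iff_forall_exists_lt_snd fun _ ⟨hq, h₀, h₁⟩ => by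
    rw [abs_sub_comm, abs_of_pos h₀]; exact (lt_of_mul_natCast_lt hq h₀.le h₁).le

section Inverse

variable {γ c : ℝ} {p : ℤ} {q : ℕ}

lemma natCast_toNat_of_pos (hp : 0 < p) : ((p.toNat : ℕ) : ℝ) = p := by
  exact_mod_cast Int.toNat_of_nonneg hp.le

lemma swap_mem_upperApprox_inv (hγ : 0 < γ) (h : (p, q) ∈ lowerApprox γ c) (hp : 0 < p) :
    ((q : ℤ), p.toNat) ∈ upperApprox γ⁻¹ c := by
  obtain ⟨hq, h₀, h₁⟩ := h
  dsimp only at h₀ h₁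
  have key : (q : ℝ) - p * γ⁻¹ = (q * γ - p) / γ := by field_simp
  refine ⟨Int.lt_toNat.2 hp, ?_, ?_⟩ <;>
    simp only [Int.cast_natCast, natCast_toNat_of_pos hp, key]
  · positivity
  · rw [div_mul_eq_mul_div, div_lt_iff₀ hγ]
    nlinarith

lemma swap_mem_lowerApprox_inv {ε : ℝ} (hγ : 0 < γ) (h : (p, q) ∈ upperApprox γ c)
    (hc : c ^ 2 ≤ ε * γ * q ^ 2) : ((q : ℤ), p.toNat) ∈ lowerApprox γ⁻¹ (c + ε) := by
  obtain ⟨hq, h₀, h₁⟩ := h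
  dsimp only at h₀ h₁
  have hp : 0 < p := by
    have : (0 : ℝ) < p := by have : (0 : ℝ) < q := Nat.cast_pos.2 hq; nlinarith
    exact_mod_cast this
  have key : (p : ℝ) * γ⁻¹ - q = (p - q * γ) / γ := by field_simp
  have hsq : (p - q * γ) ^ 2 < ε * γ := by
    have hq' : (0 : ℝ) < q := Nat.cast_pos.2 hq
    have : ((p - q * γ) * q) ^ 2 < c ^ 2 := pow_lt_pow_left₀ h₁ (by positivity) two_ne_zero
    rw [mul_pow] at this
    exact lt_of_mul_lt_mul_right (this.trans_le hc) (by positivity)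
  refine ⟨Int.lt_toNat.2 hp, ?_, ?_⟩ <;>
    simp only [Int.cast_natCast, natCast_toNat_of_pos hp, key]
  · positivity
  · rw [div_mul_eq_mul_div, div_lt_iff₀ hγ]
    nlinarith

lemma upperApprox_inv_infinite (hγ : 0 < γ) (h : (lowerApprox γ c).Infinite) :
    (upperApprox γ⁻¹ c).Infinite := by
  rw [lowerApprox_infinite_iff] at h
  refine upperApprox_infinite_iff.2 fun M => ?_
  obtain ⟨⟨p, q⟩, hmem, hqM⟩ := h ⌈(M + c) / γ⌉₊
  have hMq : M + c < q * γ := by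
    have := Nat.lt_of_ceil_lt hqM
    rwa [div_lt_iff₀ hγ] at this
  have hpM : (M : ℝ) < p := by
    obtain ⟨hq, h₀, h₁⟩ := hmem
    linarith [lt_of_mul_natCast_lt hq h₀.le h₁]
  have hp : 0 < p := by exact_mod_cast (Nat.cast_nonneg M).trans_lt hpM
  exact ⟨_, swap_mem_upperApprox_inv hγ hmem hp, Int.lt_toNat.2 (by exact_mod_cast hpM)⟩

lemma lowerApprox_inv_infinite {ε : ℝ} (hγ : 0 < γ) (hε : 0 < ε) (h : (upperApprox γ c).Infinite) :
    (lowerApprox γ⁻¹ (c + ε)).Infinite := by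
  rw [upperApprox_infinite_iff] at h
  refine lowerApprox_infinite_iff.2 fun M => ?_
  obtain ⟨⟨p, q⟩, hmem, hqM⟩ := h (max ⌈M / γ⌉₊ ⌈c ^ 2 / (ε * γ)⌉₊)
  have hMq : M < q * γ := by
    have := Nat.lt_of_ceil_lt (le_max_left _ _ |>.trans_lt hqM)
    rwa [div_lt_iff₀ hγ] at this
  have hcq : c ^ 2 ≤ ε * γ * q ^ 2 := by
    have := Nat.lt_of_ceil_lt (le_max_right _ _ |>.trans_lt hqM)
    rw [div_lt_iff₀ (by positivity)] at this
    have : (1 : ℝ) ≤ q := Nat.one_le_cast.2 hmem.1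
    nlinarith [mul_pos hε hγ]
  have hpM : (M : ℝ) < p := by linarith [hmem.2.1]
  refine ⟨_, swap_mem_lowerApprox_inv hγ hmem hcq, Int.lt_toNat.2 (by exact_mod_cast hpM)⟩

end Inverse

lemma exists_pos_forall_abs_mul_sub_lt_imp_lt {γ : ℝ} (hγ : Irrational γ) (M : ℕ) :
    ∃ δ > 0, ∀ (p : ℤ) (q : ℕ), 0 < q → |q * γ - p| < δ → M < q := by
  obtain ⟨q₀, hq₀, hmin⟩ := (Finset.Icc 1 (M + 1)).exists_min_image
    (fun q : ℕ => |q * γ - round ((q : ℝ) * γ)|) ⟨1, by simp⟩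
  have hq₀' : q₀ ≠ 0 := by rw [Finset.mem_Icc] at hq₀; omega
  refine ⟨|q₀ * γ - round ((q₀ : ℝ) * γ)|,
    abs_pos.2 (sub_ne_zero.2 ((hγ.natCast_mul hq₀').ne_int _)), fun p q hq h => ?_⟩
  by_contra! hqM
  exact h.not_ge ((hmin q (Finset.mem_Icc.2 ⟨hq, by omega⟩)).trans (round_le _ p))

lemma exists_mul_sub_mul_eq_one {p : ℤ} {q : ℕ} (hq : 0 < q) (h : IsCoprime p q) :
    ∃ (p' : ℤ) (q' : ℕ), 0 < q' ∧ q' ≤ q ∧ p * q' - p' * q = 1 := by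
  obtain ⟨a, b, hab⟩ := h
  have hq' : (0 : ℤ) < q := by exact_mod_cast hq
  have h₀ := Int.emod_nonneg (a - 1) hq'.ne'
  have h₁ := Int.emod_lt_of_pos (a - 1) hq'
  have hdiv := Int.emod_add_mul_ediv (a - 1) q
  refine ⟨-(b + p * ((a - 1) / q)), ((a - 1) % q + 1).toNat, by omega, by omega, ?_⟩
  rw [Int.toNat_of_nonneg (by omega)]
  linear_combination hab + p * hdiv

lemma exists_mem_lowerApprox_of_upper {γ : ℝ} {p : ℤ} {q : ℕ} (hq : 0 < q) (hpq : IsCoprime p q)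
    (h₀ : 0 < p - q * γ) (h₁ : (p - q * γ) * q < 1) :
    ∃ pq ∈ lowerApprox γ 1, |pq.2 * γ - pq.1| < 1 / q := by
  obtain ⟨p', q', hq', hq'q, hdet⟩ := exists_mul_sub_mul_eq_one hq hpq
  have hdetR : (p : ℝ) * q' - p' * q = 1 := by exact_mod_cast hdet
  have hqR : (0 : ℝ) < q := Nat.cast_pos.2 hq
  have hq'R : (0 : ℝ) < q' := Nat.cast_pos.2 hq'
  have hq'qR : (q' : ℝ) ≤ q := Nat.cast_le.2 hq'q
  -- `p'/q' = p/q - 1/(qq')` is the Farey neighbour of `p/q` on the other side of `γ`.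
  have key : (q' * γ - p') * q = 1 - q' * (p - q * γ) := by linear_combination hdetR
  have hpos : 0 < (q' : ℝ) * γ - p' := by
    have : (q' : ℝ) * (p - q * γ) < 1 := by nlinarith
    nlinarith
  have hlt : ((q' : ℝ) * γ - p') * q < 1 := by nlinarith
  refine ⟨(p', q'), ⟨hq', hpos, by dsimp only; nlinarith⟩, ?_⟩
  rw [abs_of_pos hpos, lt_div_iff₀ hqR]
  exact hlt

lemma exists_isCoprime_abs_mul_sub_le (γ : ℝ) (n : ℕ) :
    ∃ (p : ℤ) (q : ℕ), 0 < q ∧ q ≤ n + 1 ∧ IsCoprime p q ∧ |q * γ - p| ≤ 1 / (n + 2) := by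
  obtain ⟨r, hr, hrn⟩ := Real.exists_rat_abs_sub_le_and_den_le γ n.succ_pos
  have hq : (0 : ℝ) < r.den := Nat.cast_pos.2 r.den_pos
  refine ⟨r.num, r.den, r.den_pos, hrn, r.isCoprime_num_den, ?_⟩
  rw [Rat.cast_def, le_div_iff₀ (by positivity)] at hr
  calc |r.den * γ - r.num| = |(γ - r.num / r.den) * r.den| := by congr 1; field_simp
    _ = |γ - r.num / r.den| * r.den := by rw [abs_mul, abs_of_pos hq]
    _ ≤ 1 / (n + 2) := by
        rw [le_div_iff₀ (by positivity)]; push_cast at hr; linarith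

lemma exists_mem_lowerApprox_one_lt_snd {γ : ℝ} (hγ : Irrational γ) (M : ℕ) :
    ∃ pq ∈ lowerApprox γ 1, M < pq.2 := by
  obtain ⟨δ, hδ, hM⟩ := exists_pos_forall_abs_mul_sub_lt_imp_lt hγ M
  -- `δ'` forces `1/q < δ`, so that a flipped approximation, with `|q'γ - p'| < 1/q`, has `q' > M`.
  obtain ⟨δ', hδ', hK⟩ := exists_pos_forall_abs_mul_sub_lt_imp_lt hγ ⌈δ⁻¹⌉₊
  obtain ⟨n, hn⟩ := exists_nat_one_div_lt (lt_min hδ hδ')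
  obtain ⟨p, q, hq, hqn, hpq, he⟩ := exists_isCoprime_abs_mul_sub_le γ n
  have hsmall : |q * γ - p| < min δ δ' :=
    he.trans_lt (lt_of_le_of_lt (one_div_le_one_div_of_le (by positivity) (by linarith)) hn)
  have hmul : |q * γ - p| * q < 1 := by
    have : (q : ℝ) < n + 2 := by exact_mod_cast Nat.lt_succ_of_le hqn
    rw [le_div_iff₀ (by positivity)] at he
    nlinarith [abs_nonneg ((q : ℝ) * γ - p)]
  rcases (sub_ne_zero.2 ((hγ.natCast_mul hq.ne').ne_int p)).lt_or_gt with hneg | hpos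
  · have hqδ : 1 / (q : ℝ) < δ := by
      have := Nat.lt_of_ceil_lt (hK p q hq (hsmall.trans_le (min_le_right _ _)))
      rwa [one_div, inv_lt_comm₀ (by positivity) hδ]
    rw [abs_of_neg hneg, neg_sub] at hmul
    obtain ⟨pq, hmem, hlt⟩ :=
      exists_mem_lowerApprox_of_upper (γ := γ) hq hpq (by linarith) hmul
    exact ⟨pq, hmem, hM _ _ hmem.1 (hlt.trans hqδ)⟩
  · rw [abs_of_pos hpos] at hmul
    exact ⟨(p, q), ⟨hq, hpos, hmul⟩, hM p q hq (hsmall.trans_le (min_le_left _ _))⟩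

lemma lowerApprox_one_infinite {γ : ℝ} (hγ : Irrational γ) : (lowerApprox γ 1).Infinite :=
  lowerApprox_infinite_iff.2 (exists_mem_lowerApprox_one_lt_snd hγ)

lemma upperApprox_one_infinite {γ : ℝ} (hγ : Irrational γ) : (upperApprox γ 1).Infinite := by
  refine upperApprox_infinite_iff.2 fun M => ?_
  obtain ⟨⟨p, q⟩, ⟨hq, h₀, h₁⟩, hM⟩ := exists_mem_lowerApprox_one_lt_snd hγ.neg M
  refine ⟨(-p, q), ⟨hq, ?_, ?_⟩, hM⟩ <;> simp only [Int.cast_neg] <;> linarith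

lemma lowerConsts_inv_subset {γ : ℝ} (hγ : 0 < γ) : lowerConsts γ⁻¹ ⊆ upperConsts γ :=
  fun _ ⟨hc, h⟩ => ⟨hc, inv_inv γ ▸ upperApprox_inv_infinite (inv_pos.2 hγ) h⟩

lemma add_mem_lowerConsts_inv {γ c ε : ℝ} (hγ : 0 < γ) (hc : c ∈ upperConsts γ) (hε : 0 < ε) :
    c + ε ∈ lowerConsts γ⁻¹ :=
  ⟨add_pos hc.1 hε, lowerApprox_inv_infinite hγ hε hc.2⟩

lemma csInf_eq_of_subset_of_forall_add_mem {S T : Set ℝ} (hS : S.Nonempty) (hT : BddBelow T)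
    (hST : S ⊆ T) (h : ∀ c ∈ T, ∀ ε > 0, c + ε ∈ S) : sInf S = sInf T :=
  le_antisymm
    (le_csInf (hS.mono hST) fun c hc =>
      le_of_forall_pos_le_add fun ε hε => csInf_le (hT.mono hST) (h c hc ε hε))
    (csInf_le_csInf hT hS hST)

end MarkovConstant

open MarkovConstant in
theorem stmt_5 (γ : ℝ) (hγ : Irrational γ) (hpos : 0 < γ) :
    markov γ = min (upsilon γ) (upsilon γ⁻¹) := by
  have hlower : (1 : ℝ) ∈ lowerConsts γ := ⟨one_pos, lowerApprox_one_infinite hγ⟩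
  have hupper : (1 : ℝ) ∈ upperConsts γ := ⟨one_pos, upperApprox_one_infinite hγ⟩
  have hlower_inv : (1 : ℝ) ∈ lowerConsts γ⁻¹ := ⟨one_pos, lowerApprox_one_infinite hγ.inv⟩
  rw [markov_eq hγ, csInf_union (bddBelow_lowerConsts γ) ⟨1, hlower⟩ (bddBelow_upperConsts γ)
    ⟨1, hupper⟩, upsilon_eq, upsilon_eq,
    csInf_eq_of_subset_of_forall_add_mem ⟨1, hlower_inv⟩ (bddBelow_upperConsts γ)
      (lowerConsts_inv_subset hpos) fun c hc ε hε => add_mem_lowerConsts_inv hpos hc hε]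
end

section
/- For every irrational γ > 0, υ(γ⁻¹) = inf{c > 0 : m(⌈mγ⌉ - mγ) < c for infinitely many m ∈ ℕ}, where υ is the one-sided approximation constant υ(β) = inf{c > 0 : 0 < β - p/q < c/q² for infinitely many (p,q) ∈ ℤ × ℕ}. -/
open Set

def approxPairs (β c : ℝ) : Set (ℤ × ℕ) :=
  {pq | 0 < pq.2 ∧ 0 < β - (pq.1 : ℝ) / (pq.2 : ℝ) ∧
    β - (pq.1 : ℝ) / (pq.2 : ℝ) < c / (pq.2 : ℝ) ^ 2}

def ceilDefectSet (γ c : ℝ) : Set ℕ :=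
  {m | 0 < m ∧ (m : ℝ) * ((⌈(m : ℝ) * γ⌉ : ℝ) - (m : ℝ) * γ) < c}

theorem Real.sInf_eq_of_subset_of_forall_add_mem {A B : Set ℝ} (hB : BddBelow B) (hAB : A ⊆ B)
    (hadd : ∀ c ∈ B, ∀ ε > 0, c + ε ∈ A) : sInf A = sInf B := by
  rcases B.eq_empty_or_nonempty with rfl | ⟨c₀, hc₀⟩
  · rw [subset_empty_iff.mp hAB]
  refine le_antisymm ?_ (csInf_le_csInf hB ⟨_, hadd c₀ hc₀ 1 one_pos⟩ hAB)
  refine le_csInf ⟨c₀, hc₀⟩ fun c hc => le_of_forall_pos_le_add fun ε hε => ?_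
  exact csInf_le (hB.mono hAB) (hadd c hc ε hε)

theorem Irrational.ceil_natCast_mul_sub_pos {γ : ℝ} (hγ : Irrational γ) {m : ℕ} (hm : 0 < m) :
    0 < (⌈(m : ℝ) * γ⌉ : ℝ) - m * γ :=
  sub_pos.mpr <| (Int.le_ceil _).lt_of_ne fun h => (hγ.natCast_mul hm.ne').ne_int _ h

theorem approxPairs_inter_le_finite (β c : ℝ) (N : ℕ) :
    (approxPairs β c ∩ {pq | pq.2 ≤ N}).Finite := by
  set M : ℤ := ⌈|β| * N + |c|⌉
  refine ((finite_Icc (-M) M).prod (finite_Iic N)).subset ?_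
  rintro ⟨p, q⟩ ⟨⟨hq, h1, h2⟩, hqN⟩
  have hq1 : (1 : ℝ) ≤ q := by exact_mod_cast hq
  have hqN' : (q : ℝ) ≤ N := by exact_mod_cast hqN
  have hup : (p : ℝ) < β * q := by
    rwa [sub_pos, div_lt_iff₀ (by positivity)] at h1
  have hdown : β * q - p < |c| := by
    have : (β - p / q) * q < c / q ^ 2 * q := mul_lt_mul_of_pos_right h2 (by positivity)
    field_simp at this
    nlinarith [le_abs_self c]
  have hβq : |β * q| ≤ |β| * N := by
    rw [abs_mul, Nat.abs_cast]; gcongr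
  have hM : |β| * N + |c| ≤ M := Int.le_ceil _
  have hlo : (-M : ℝ) ≤ p := by linarith [neg_abs_le (β * q), abs_nonneg β]
  have hhi : (p : ℝ) ≤ M := by linarith [le_abs_self (β * q), abs_nonneg c]
  exact ⟨⟨by exact_mod_cast hlo, by exact_mod_cast hhi⟩, hqN⟩

theorem mem_approxPairs_inv_iff {γ c : ℝ} (hγ : 0 < γ) {p : ℤ} {q : ℕ} (hq : 0 < q) :
    (p, q) ∈ approxPairs γ⁻¹ c ↔ (p : ℝ) * γ < q ∧ q * (q - p * γ) < c * γ := by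
  have hq' : (0 : ℝ) < q := by exact_mod_cast hq
  have key : γ⁻¹ - (p : ℝ) / q = (q - p * γ) / (q * γ) := by field_simp
  simp only [approxPairs, mem_ofPred_eq, key, hq, true_and]
  rw [div_pos_iff_of_pos_right (by positivity), sub_pos,
    div_lt_div_iff₀ (by positivity) (by positivity)]
  refine and_congr_right fun _ => ?_
  rw [show ((q : ℝ) - p * γ) * q ^ 2 = q * (q * (q - p * γ)) by ring,
    show c * (q * γ) = q * (c * γ) by ring, mul_lt_mul_iff_right₀ hq']

theorem ceil_eq_of_mem_approxPairs_inv {γ c : ℝ} (hγ : 0 < γ) {p : ℤ} {q : ℕ}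
    (hpq : (p, q) ∈ approxPairs γ⁻¹ c) (hcq : c * γ < q) :
    0 < p ∧ ⌈(p : ℝ) * γ⌉ = q ∧ (p : ℝ) * (q - p * γ) < c := by
  obtain ⟨hlt, hprod⟩ := (mem_approxPairs_inv_iff hγ hpq.1).mp hpq
  have hq1 : (1 : ℝ) ≤ q := by exact_mod_cast hpq.1
  have hθ1 : (q : ℝ) - p * γ < 1 := by nlinarith
  have hpγ : 0 < (p : ℝ) * γ := by linarith
  have hp : 0 < p := by exact_mod_cast pos_of_mul_pos_left hpγ hγ.le
  refine ⟨hp, ?_, ?_⟩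
  · rw [Int.ceil_eq_iff]; push_cast; constructor <;> linarith
  · have : p * γ * (q - p * γ) < c * γ := by nlinarith
    nlinarith

theorem ceilDefectSet_infinite_of_approxPairs_inv {γ c : ℝ} (hγ : 0 < γ)
    (h : (approxPairs γ⁻¹ c).Infinite) : (ceilDefectSet γ c).Infinite := by
  refine Infinite.of_image (fun m : ℕ => ((m : ℤ), ⌈(m : ℝ) * γ⌉₊))
    ((h.sdiff (approxPairs_inter_le_finite γ⁻¹ c ⌈c * γ⌉₊)).mono ?_)
  rintro ⟨p, q⟩ ⟨hpq, hqN⟩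
  have hcq : c * γ < q := Nat.lt_of_ceil_lt (not_le.mp fun h => hqN ⟨hpq, h⟩)
  obtain ⟨hp, hceil, hdef⟩ := ceil_eq_of_mem_approxPairs_inv hγ hpq hcq
  lift p to ℕ using hp.le
  simp only [Int.cast_natCast] at hceil hdef
  refine ⟨p, ⟨by exact_mod_cast hp, ?_⟩, ?_⟩
  · rwa [hceil]
  · have : (⌈(p : ℝ) * γ⌉₊ : ℤ) = q := by
      rw [Int.natCast_ceil_eq_ceil (by positivity), hceil]
    simp only [Prod.mk.injEq, true_and]
    exact_mod_cast this

theorem mem_approxPairs_inv_of_mem_ceilDefectSet {γ c ε : ℝ} (hγ : Irrational γ) (hpos : 0 < γ)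
    {m : ℕ} (hm : m ∈ ceilDefectSet γ c) (hmε : c ≤ ε * γ * m) :
    ((m : ℤ), ⌈(m : ℝ) * γ⌉₊) ∈ approxPairs γ⁻¹ (c + ε) := by
  obtain ⟨hm0, hdef⟩ := hm
  have hmγ : 0 < (m : ℝ) * γ := by positivity
  have hθ0 := hγ.ceil_natCast_mul_sub_pos hm0
  have hθ1 : (⌈(m : ℝ) * γ⌉ : ℝ) - m * γ < 1 := by
    linarith [Int.ceil_lt_add_one ((m : ℝ) * γ)]
  rw [mem_approxPairs_inv_iff hpos (Nat.ceil_pos.mpr hmγ), Int.cast_natCast,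
    natCast_ceil_eq_intCast_ceil hmγ.le]
  set θ := (⌈(m : ℝ) * γ⌉ : ℝ) - m * γ
  have hθε : θ < ε * γ := by nlinarith
  have hq : (⌈(m : ℝ) * γ⌉ : ℝ) = m * γ + θ := by ring
  refine ⟨by linarith, ?_⟩
  rw [hq]
  nlinarith

theorem approxPairs_inv_infinite_of_ceilDefectSet {γ c ε : ℝ} (hγ : Irrational γ)
    (hpos : 0 < γ) (hε : 0 < ε) (h : (ceilDefectSet γ c).Infinite) :
    (approxPairs γ⁻¹ (c + ε)).Infinite := by
  obtain ⟨N, hN⟩ := exists_nat_ge (c / (ε * γ))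
  refine ((h.sdiff (finite_lt_nat N)).image (f := fun m : ℕ => ((m : ℤ), ⌈(m : ℝ) * γ⌉₊))
    fun a _ b _ hab => ?_).mono ?_
  · simpa using congrArg Prod.fst hab
  · rintro _ ⟨m, ⟨hm, hmN⟩, rfl⟩
    refine mem_approxPairs_inv_of_mem_ceilDefectSet hγ hpos hm ?_
    have : (N : ℝ) ≤ m := by exact_mod_cast not_lt.mp hmN
    rw [div_le_iff₀ (by positivity)] at hN
    nlinarith [mul_le_mul_of_nonneg_left this (by positivity : 0 ≤ ε * γ)]

theorem stmt_7 (γ : ℝ) (hγ : Irrational γ) (hpos : 0 < γ) :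
    upsilon γ⁻¹ = sInf {c : ℝ | 0 < c ∧
      {m : ℕ | 0 < m ∧ (m : ℝ) * ((⌈(m : ℝ) * γ⌉ : ℝ) - (m : ℝ) * γ) < c}.Infinite} :=
  Real.sInf_eq_of_subset_of_forall_add_mem ⟨0, fun _ hc => hc.1.le⟩
    (fun _ hc => ⟨hc.1, ceilDefectSet_infinite_of_approxPairs_inv hpos hc.2⟩)
    fun _ hc _ hε =>
      ⟨by linarith [hc.1], approxPairs_inv_infinite_of_ceilDefectSet hγ hpos hε hc.2⟩
end

section
/- Let γ be irrational with continued fraction expansion [c_0; c_1, c_2, …] and convergents p_n/q_n. Then for every n ≥ 2, q_n|q_n γ - p_n| > 1/(c_{n+1} + 1/c_{n+2} + 1/c_n). -/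
/-- Numerator of the `n`-th convergent of the continued fraction with
partial quotients `c`. -/
def convP (c : ℕ → ℤ) : ℕ → ℤ
  | 0 => c 0
  | 1 => c 1 * c 0 + 1
  | (n + 2) => c (n + 2) * convP c (n + 1) + convP c n

/-- Denominator of the `n`-th convergent of the continued fraction with
partial quotients `c`. -/
def convQ (c : ℕ → ℤ) : ℕ → ℤ
  | 0 => 1
  | 1 => c 1
  | (n + 2) => c (n + 2) * convQ c (n + 1) + convQ c n

/-- `γ` has (infinite) continued fraction expansion `[c 0; c 1, c 2, ...]`:
all partial quotients with positive index are positive integers, and the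
convergents tend to `γ`. -/
def IsCF (γ : ℝ) (c : ℕ → ℤ) : Prop :=
  (∀ n, 1 ≤ n → 1 ≤ c n) ∧
  Filter.Tendsto (fun n => (convP c n : ℝ) / (convQ c n : ℝ)) Filter.atTop (nhds γ)

lemma convQ_pos (c : ℕ → ℤ) (hc : ∀ n, 1 ≤ n → 1 ≤ c n) : ∀ n, 0 < convQ c n := by
  have key : ∀ n, 0 < convQ c n ∧ 0 < convQ c (n+1) := by
    intro n
    induction n with
    | zero =>
      refine ⟨by simp [convQ], ?_⟩
      show (0 : ℤ) < c 1
      linarith [hc 1 le_rfl]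
    | succ k ih =>
      refine ⟨ih.2, ?_⟩
      show 0 < c (k+2) * convQ c (k+1) + convQ c k
      have := hc (k+2) (by omega)
      nlinarith [ih.1, ih.2]
  exact fun n => (key n).1

lemma convDet (c : ℕ → ℤ) : ∀ n, convP c (n+1) * convQ c n - convP c n * convQ c (n+1) = (-1)^n := by
  intro n
  induction n with
  | zero =>
    show (c 1 * c 0 + 1) * 1 - c 0 * c 1 = _
    ring
  | succ k ih =>
    show (c (k+2) * convP c (k+1) + convP c k) * convQ c (k+1) -
        convP c (k+1) * (c (k+2) * convQ c (k+1) + convQ c k) = _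
    have : (-1 : ℤ)^(k+1) = -(-1)^k := by ring
    rw [this]
    linear_combination -ih

lemma convDet2 (c : ℕ → ℤ) (n : ℕ) :
    convP c (n+2) * convQ c n - convP c n * convQ c (n+2) = (-1)^n * c (n+2) := by
  have h := convDet c n
  show (c (n+2) * convP c (n+1) + convP c n) * convQ c n -
      convP c n * (c (n+2) * convQ c (n+1) + convQ c n) = _
  linear_combination c (n+2) * h

lemma diff2 (c : ℕ → ℤ) (hc : ∀ n, 1 ≤ n → 1 ≤ c n) (n : ℕ) :
    (convP c (n+2) : ℝ)/(convQ c (n+2)) - (convP c n : ℝ)/(convQ c n)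
      = (-1)^n * (c (n+2) : ℝ) / ((convQ c n : ℝ) * (convQ c (n+2))) := by
  have h0 : (0:ℝ) < (convQ c n : ℝ) := by exact_mod_cast convQ_pos c hc n
  have h2 : (0:ℝ) < (convQ c (n+2) : ℝ) := by exact_mod_cast convQ_pos c hc (n+2)
  have hd : (convP c (n+2) : ℝ) * (convQ c n : ℝ) - (convP c n : ℝ) * (convQ c (n+2) : ℝ)
      = (-1)^n * (c (n+2) : ℝ) := by exact_mod_cast convDet2 c n
  rw [div_sub_div _ _ (ne_of_gt h2) (ne_of_gt h0)]
  rw [show (convP c (n+2) : ℝ) * (convQ c n : ℝ) - (convQ c (n+2) : ℝ) * (convP c n : ℝ)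
      = (-1)^n * (c (n+2) : ℝ) by linarith, mul_comm (convQ c (n+2) : ℝ) (convQ c n : ℝ)]

lemma conv_mono_even (c : ℕ → ℤ) (hc : ∀ n, 1 ≤ n → 1 ≤ c n) (n : ℕ) (hn : Even n) :
    (convP c n : ℝ)/(convQ c n) < (convP c (n+2) : ℝ)/(convQ c (n+2)) := by
  have h0 : (0:ℝ) < (convQ c n : ℝ) := by exact_mod_cast convQ_pos c hc n
  have h2 : (0:ℝ) < (convQ c (n+2) : ℝ) := by exact_mod_cast convQ_pos c hc (n+2)
  have hcc : (1:ℝ) ≤ (c (n+2) : ℝ) := by exact_mod_cast hc (n+2) (by omega)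
  have hd := diff2 c hc n
  rw [hn.neg_one_pow, one_mul] at hd
  have hpos : (0:ℝ) < (c (n+2) : ℝ) / ((convQ c n : ℝ) * (convQ c (n+2))) :=
    div_pos (by linarith) (mul_pos h0 h2)
  linarith

lemma conv_mono_odd (c : ℕ → ℤ) (hc : ∀ n, 1 ≤ n → 1 ≤ c n) (n : ℕ) (hn : Odd n) :
    (convP c (n+2) : ℝ)/(convQ c (n+2)) < (convP c n : ℝ)/(convQ c n) := by
  have h0 : (0:ℝ) < (convQ c n : ℝ) := by exact_mod_cast convQ_pos c hc n
  have h2 : (0:ℝ) < (convQ c (n+2) : ℝ) := by exact_mod_cast convQ_pos c hc (n+2)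
  have hcc : (1:ℝ) ≤ (c (n+2) : ℝ) := by exact_mod_cast hc (n+2) (by omega)
  have hd := diff2 c hc n
  rw [hn.neg_one_pow, neg_one_mul, neg_div] at hd
  have hpos : (0:ℝ) < (c (n+2) : ℝ) / ((convQ c n : ℝ) * (convQ c (n+2))) :=
    div_pos (by linarith) (mul_pos h0 h2)
  linarith

lemma conv_le_gamma (γ : ℝ) (c : ℕ → ℤ) (hcf : IsCF γ c) (n : ℕ) (hn : Even n) :
    (convP c n : ℝ)/(convQ c n) ≤ γ := by
  obtain ⟨hc, htend⟩ := hcf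
  have mono : ∀ k, (convP c n : ℝ)/(convQ c n) ≤ (convP c (n + 2*k) : ℝ)/(convQ c (n + 2*k)) := by
    intro k
    induction k with
    | zero => simp
    | succ j ih =>
      have he : Even (n + 2*j) := hn.add ⟨j, by ring⟩
      have := conv_mono_even c hc (n + 2*j) he
      have harr : n + 2*(j+1) = (n + 2*j) + 2 := by ring
      rw [harr]
      linarith
  have hsm : StrictMono (fun k => n + 2*k) := strictMono_nat_of_lt_succ (fun k => by omega)
  have htend' : Filter.Tendsto (fun k => (convP c (n + 2*k) : ℝ)/(convQ c (n + 2*k)))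
      Filter.atTop (nhds γ) := htend.comp hsm.tendsto_atTop
  exact ge_of_tendsto' htend' mono

lemma gamma_le_conv (γ : ℝ) (c : ℕ → ℤ) (hcf : IsCF γ c) (n : ℕ) (hn : Odd n) :
    γ ≤ (convP c n : ℝ)/(convQ c n) := by
  obtain ⟨hc, htend⟩ := hcf
  have mono : ∀ k, (convP c (n + 2*k) : ℝ)/(convQ c (n + 2*k)) ≤ (convP c n : ℝ)/(convQ c n) := by
    intro k
    induction k with
    | zero => simp
    | succ j ih =>
      have he : Odd (n + 2*j) := by
        rcases hn with ⟨t, ht⟩; exact ⟨t + j, by omega⟩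
      have := conv_mono_odd c hc (n + 2*j) he
      have harr : n + 2*(j+1) = (n + 2*j) + 2 := by ring
      rw [harr]
      linarith
  have hsm : StrictMono (fun k => n + 2*k) := strictMono_nat_of_lt_succ (fun k => by omega)
  have htend' : Filter.Tendsto (fun k => (convP c (n + 2*k) : ℝ)/(convQ c (n + 2*k)))
      Filter.atTop (nhds γ) := htend.comp hsm.tendsto_atTop
  exact le_of_tendsto' htend' mono

theorem stmt_10 (γ : ℝ) (hγ : Irrational γ) (c : ℕ → ℤ) (hcf : IsCF γ c)
    (n : ℕ) (hn : 2 ≤ n) :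
    (convQ c n : ℝ) * |(convQ c n : ℝ) * γ - (convP c n : ℝ)| >
      1 / ((c (n + 1) : ℝ) + 1 / (c (n + 2) : ℝ) + 1 / (c n : ℝ)) := by
  obtain ⟨hc, htend⟩ := hcf
  obtain ⟨m, rfl⟩ : ∃ m, n = m + 2 := ⟨n - 2, by omega⟩
  have hQ : ∀ k, (0:ℝ) < (convQ c k : ℝ) := fun k => by exact_mod_cast convQ_pos c hc k
  have hC : ∀ k, 1 ≤ k → (1:ℝ) ≤ (c k : ℝ) := fun k hk => by exact_mod_cast hc k hk
  have hcN : (1:ℝ) ≤ (c (m+2) : ℝ) := hC (m+2) (by omega)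
  have hcN1 : (1:ℝ) ≤ (c (m+3) : ℝ) := hC (m+3) (by omega)
  have hcN2 : (1:ℝ) ≤ (c (m+4) : ℝ) := hC (m+4) (by omega)
  have hd := diff2 c hc (m+2)
  have habs : |γ - (convP c (m+2) : ℝ)/(convQ c (m+2))|
      ≥ (c (m+4) : ℝ) / ((convQ c (m+2) : ℝ) * (convQ c (m+4))) := by
    have hdenpos : (0:ℝ) < (c (m+4) : ℝ) / ((convQ c (m+2) : ℝ) * (convQ c (m+4))) :=
      div_pos (by linarith) (mul_pos (hQ (m+2)) (hQ (m+4)))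
    rcases Nat.even_or_odd (m+2) with he | ho
    · have h1 : (convP c (m+4) : ℝ)/(convQ c (m+4)) ≤ γ := by
        have he4 : Even (m+4) := by rcases he with ⟨t, ht⟩; exact ⟨t+1, by omega⟩
        exact conv_le_gamma γ c ⟨hc, htend⟩ (m+4) he4
      rw [he.neg_one_pow, one_mul] at hd
      rw [abs_of_nonneg (by linarith)]
      linarith
    · have h1 : γ ≤ (convP c (m+4) : ℝ)/(convQ c (m+4)) := by
        have ho4 : Odd (m+4) := by rcases ho with ⟨t, ht⟩; exact ⟨t+1, by omega⟩
        exact gamma_le_conv γ c ⟨hc, htend⟩ (m+4) ho4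
      rw [ho.neg_one_pow, neg_one_mul, neg_div] at hd
      rw [abs_sub_comm, abs_of_nonneg (by linarith)]
      linarith
  have hq : (convQ c (m+2) : ℝ) ≠ 0 := ne_of_gt (hQ (m+2))
  have hrw : (convQ c (m+2) : ℝ) * γ - (convP c (m+2) : ℝ)
      = (convQ c (m+2) : ℝ) * (γ - (convP c (m+2) : ℝ)/(convQ c (m+2))) := by
    field_simp
  rw [hrw, abs_mul, abs_of_pos (hQ (m+2))]
  have hlow : (convQ c (m+2) : ℝ) * ((convQ c (m+2) : ℝ) * |γ - (convP c (m+2) : ℝ)/(convQ c (m+2))|)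
      ≥ (convQ c (m+2) : ℝ) * (c (m+4) : ℝ) / (convQ c (m+4) : ℝ) := by
    have h := mul_le_mul_of_nonneg_left habs (le_of_lt (mul_pos (hQ (m+2)) (hQ (m+2))))
    have heq : (convQ c (m+2) : ℝ) * (convQ c (m+2) : ℝ) *
        ((c (m+4) : ℝ) / ((convQ c (m+2) : ℝ) * (convQ c (m+4))))
        = (convQ c (m+2) : ℝ) * (c (m+4) : ℝ) / (convQ c (m+4) : ℝ) := by
      have hq4 : (convQ c (m+4) : ℝ) ≠ 0 := ne_of_gt (hQ (m+4))
      field_simp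
    nlinarith [h]
  have hQN2 : (convQ c (m+4) : ℝ) = (c (m+4) : ℝ) * (convQ c (m+3) : ℝ) + (convQ c (m+2) : ℝ) := by
    have : convQ c (m+4) = c (m+4) * convQ c (m+3) + convQ c (m+2) := rfl
    rw [this]; push_cast; ring
  have hQN1 : (convQ c (m+3) : ℝ) = (c (m+3) : ℝ) * (convQ c (m+2) : ℝ) + (convQ c (m+1) : ℝ) := by
    have : convQ c (m+3) = c (m+3) * convQ c (m+2) + convQ c (m+1) := rfl
    rw [this]; push_cast; ring
  have hQN : (convQ c (m+2) : ℝ) = (c (m+2) : ℝ) * (convQ c (m+1) : ℝ) + (convQ c m : ℝ) := by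
    have : convQ c (m+2) = c (m+2) * convQ c (m+1) + convQ c m := rfl
    rw [this]; push_cast; ring
  have hQm : (1:ℝ) ≤ (convQ c m : ℝ) := by
    have := convQ_pos c hc m; exact_mod_cast this
  have hfin : (convQ c (m+2) : ℝ) * (c (m+4) : ℝ) / (convQ c (m+4) : ℝ)
      > 1 / ((c (m + 2 + 1) : ℝ) + 1 / (c (m + 2 + 2) : ℝ) + 1 / (c (m+2) : ℝ)) := by
    have hc3 : (m + 2 + 1) = m + 3 := by ring
    have hc4 : (m + 2 + 2) = m + 4 := by ring
    rw [hc3, hc4]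
    have hcN' : (0:ℝ) < (c (m+2) : ℝ) := by linarith
    have hcN2' : (0:ℝ) < (c (m+4) : ℝ) := by linarith
    have hden : (0:ℝ) < (c (m+3) : ℝ) + 1 / (c (m+4) : ℝ) + 1 / (c (m+2) : ℝ) := by
      have h1 : (0:ℝ) < 1 / (c (m+4) : ℝ) := by positivity
      have h2 : (0:ℝ) < 1 / (c (m+2) : ℝ) := by positivity
      linarith
    rw [gt_iff_lt, div_lt_div_iff₀ hden (hQ (m+4)), one_mul]
    have e1 : (convQ c (m+2) : ℝ) * (c (m+4) : ℝ) *
        ((c (m+3) : ℝ) + 1 / (c (m+4) : ℝ) + 1 / (c (m+2) : ℝ))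
        = (c (m+3) : ℝ) * (convQ c (m+2) : ℝ) * (c (m+4) : ℝ) + (convQ c (m+2) : ℝ)
          + (convQ c (m+2) : ℝ) * (c (m+4) : ℝ) / (c (m+2) : ℝ) := by
      field_simp
    have e2 : (convQ c (m+4) : ℝ)
        = (c (m+4) : ℝ) * (c (m+3) : ℝ) * (convQ c (m+2) : ℝ) + (c (m+4) : ℝ) * (convQ c (m+1) : ℝ)
          + (convQ c (m+2) : ℝ) := by
      rw [hQN2, hQN1]; ring
    have e3 : (c (m+4) : ℝ) * (convQ c (m+1) : ℝ)
        < (convQ c (m+2) : ℝ) * (c (m+4) : ℝ) / (c (m+2) : ℝ) := by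
      rw [lt_div_iff₀ hcN']
      have h5 : (convQ c (m+2) : ℝ) * (c (m+4) : ℝ)
          = (c (m+2) : ℝ) * (convQ c (m+1) : ℝ) * (c (m+4) : ℝ) + (convQ c m : ℝ) * (c (m+4) : ℝ) := by
        rw [hQN]; ring
      have h6 : (0:ℝ) < (convQ c m : ℝ) * (c (m+4) : ℝ) := mul_pos (hQ m) hcN2'
      linarith
    linarith
  calc (convQ c (m+2) : ℝ) * ((convQ c (m+2) : ℝ) * |γ - (convP c (m+2) : ℝ)/(convQ c (m+2))|)
      ≥ (convQ c (m+2) : ℝ) * (c (m+4) : ℝ) / (convQ c (m+4) : ℝ) := hlow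
    _ > _ := hfin
end

section
/- Let γ = [0; 1, 1, c_3, 1, c_5, 1, c_7, …] be irrational with c_{2n+1} ∈ {1, 2} for all n ≥ 1 (and all even-index partial quotients after c_2, plus c_1, c_2, equal to 1). If m ∈ ℕ is such that ⌊mγ⌋/m is not a convergent of γ, then m(mγ - ⌊mγ⌋) > 1. -/
/-!
Choose `k` with `q_{2k} ≤ m < q_{2k+2} = q_{2k} + q_{2k+1}` (here `c_{2k+2} = 1` is used). Since
`p_{2k+1} q_{2k} - p_{2k} q_{2k+1} = 1`, these two convergents give a basis of `ℤ²`, so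
`(m, ⌊mγ⌋) = a (q_{2k}, p_{2k}) + b (q_{2k+1}, p_{2k+1})` with `a, b ∈ ℤ`. As
`p_{2k}/q_{2k} < γ < p_{2k+1}/q_{2k+1}` and `⌊mγ⌋ ≤ mγ`, the bound `m < q_{2k} + q_{2k+1}` forces
`b ≤ 0`, and `b ≠ 0` because `⌊mγ⌋/m ≠ p_{2k}/q_{2k}`. Writing `θ_j = q_j γ - p_j`, the determinant
identity `θ_{2k} q_{2k+1} - θ_{2k+1} q_{2k} = 1` then gives
`m (mγ - ⌊mγ⌋) - 1 = θ_{2k} (a m - q_{2k+1}) + (-θ_{2k+1}) (-b m - q_{2k})`, where the first term is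
positive and the second nonnegative.
-/

open Filter Topology

lemma exists_le_lt_succ {f : ℕ → ℤ} {m : ℤ} (h₀ : f 0 ≤ m) {N : ℕ} (hN : m < f N) :
    ∃ k, f k ≤ m ∧ m < f (k + 1) := by
  induction N with
  | zero => exact absurd h₀ hN.not_ge
  | succ N ih => exact (le_or_gt (f N) m).elim (fun h => ⟨N, h, hN⟩) ih

section FareyPair

variable {γ : ℝ} {P₀ Q₀ P₁ Q₁ a b m p : ℤ}

lemma coeff_nonpos_of_lt_add (hQ₀ : 0 ≤ Q₀) (hQ₁ : 0 ≤ Q₁) (h₀ : P₀ ≤ Q₀ * γ)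
    (h₁ : Q₁ * γ < P₁) (hm : m = a * Q₀ + b * Q₁) (hp : p = a * P₀ + b * P₁)
    (hlt : m < Q₀ + Q₁) (hfloor : p ≤ m * γ) : b ≤ 0 := by
  by_contra! hb
  rcases le_or_gt a 0 with ha | ha
  · have hθ : (m : ℝ) * γ - p = a * (Q₀ * γ - P₀) + b * (Q₁ * γ - P₁) := by
      subst hm hp; push_cast; ring
    have h₀' : (a : ℝ) * (Q₀ * γ - P₀) ≤ 0 :=
      mul_nonpos_of_nonpos_of_nonneg (by exact_mod_cast ha) (by linarith)
    have h₁' : (b : ℝ) * (Q₁ * γ - P₁) < 0 :=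
      mul_neg_of_pos_of_neg (by exact_mod_cast hb) (by linarith)
    linarith
  · nlinarith

lemma one_lt_mul_of_coeff_neg (hdet : P₁ * Q₀ - P₀ * Q₁ = 1) (hQ₀ : 0 < Q₀) (hQ₁ : 0 ≤ Q₁)
    (h₀ : P₀ < Q₀ * γ) (h₁ : Q₁ * γ ≤ P₁) (hm : m = a * Q₀ + b * Q₁)
    (hp : p = a * P₀ + b * P₁) (hle : Q₀ ≤ m) (hb : b < 0) :
    1 < m * (m * γ - p) := by
  have ha : 0 < a := by nlinarith
  have hcoef₀ : 1 ≤ a * m - Q₁ := by nlinarith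
  have hcoef₁ : 0 ≤ -b * m - Q₀ := by nlinarith
  have hdetR : (P₁ : ℝ) * Q₀ - P₀ * Q₁ = 1 := by exact_mod_cast hdet
  have key : (m : ℝ) * (m * γ - p) - 1 =
      (Q₀ * γ - P₀) * ((a * m - Q₁ : ℤ) : ℝ) + (P₁ - Q₁ * γ) * ((-b * m - Q₀ : ℤ) : ℝ) := by
    subst hm hp; push_cast; linear_combination hdetR
  have hcoef₀' : (1 : ℝ) ≤ ((a * m - Q₁ : ℤ) : ℝ) := by exact_mod_cast hcoef₀
  have hcoef₁' : (0 : ℝ) ≤ ((-b * m - Q₀ : ℤ) : ℝ) := by exact_mod_cast hcoef₁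
  nlinarith

theorem one_lt_mul_mul_sub_of_det_eq_one (hdet : P₁ * Q₀ - P₀ * Q₁ = 1) (hQ₀ : 0 < Q₀)
    (hQ₁ : 0 ≤ Q₁) (h₀ : P₀ < Q₀ * γ) (h₁ : Q₁ * γ < P₁) (hle : Q₀ ≤ m) (hlt : m < Q₀ + Q₁)
    (hfloor : p ≤ m * γ) (hne : p * Q₀ ≠ P₀ * m) :
    1 < m * (m * γ - p) := by
  have hm : m = (m * P₁ - p * Q₁) * Q₀ + (p * Q₀ - m * P₀) * Q₁ := by
    linear_combination -m * hdet
  have hp : p = (m * P₁ - p * Q₁) * P₀ + (p * Q₀ - m * P₀) * P₁ := by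
    linear_combination -p * hdet
  have hb : p * Q₀ - m * P₀ < 0 :=
    (coeff_nonpos_of_lt_add hQ₀.le hQ₁ h₀.le h₁ hm hp hlt hfloor).lt_of_ne
      (fun h => hne (by linear_combination h))
  exact one_lt_mul_of_coeff_neg hdet hQ₀ hQ₁ h₀ h₁.le hm hp hle hb

end FareyPair

section Convergents

variable (c : ℕ → ℤ)

lemma convP_succ_mul_convQ_sub (n : ℕ) :
    convP c (n + 1) * convQ c n - convP c n * convQ c (n + 1) = (-1) ^ n := by
  induction n with
  | zero => simp [convP, convQ]; ring
  | succ n ih =>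
    simp only [convP, convQ]
    linear_combination (-1 : ℤ) * ih

lemma convP_add_two_mul_convQ_sub (n : ℕ) :
    convP c (n + 2) * convQ c n - convP c n * convQ c (n + 2) = c (n + 2) * (-1) ^ n := by
  simp only [convP, convQ]
  linear_combination c (n + 2) * convP_succ_mul_convQ_sub c n

variable {c} (hc : ∀ n, 1 ≤ n → 1 ≤ c n)
include hc

lemma one_le_convQ : ∀ n : ℕ, 1 ≤ convQ c n
  | 0 => le_rfl
  | 1 => hc 1 le_rfl
  | n + 2 => by
    have := one_le_convQ (n + 1)
    have := one_le_convQ n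
    have := hc (n + 2) (by omega)
    simp only [convQ]
    nlinarith

lemma le_convQ : ∀ n : ℕ, (n : ℤ) ≤ convQ c n
  | 0 => by simp [convQ]
  | 1 => by simpa [convQ] using hc 1 le_rfl
  | n + 2 => by
    have := le_convQ (n + 1)
    have := one_le_convQ hc n
    have := hc (n + 2) (by omega)
    simp only [convQ]
    push_cast at *
    nlinarith

lemma convQ_cast_pos (n : ℕ) : (0 : ℝ) < convQ c n := by
  exact_mod_cast one_le_convQ hc n

lemma convergent_add_two_sub (n : ℕ) :
    (convP c (n + 2) : ℝ) / convQ c (n + 2) - convP c n / convQ c n =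
      c (n + 2) * (-1) ^ n / (convQ c n * convQ c (n + 2)) := by
  have hdet : (c (n + 2) : ℝ) * (-1) ^ n =
      convP c (n + 2) * convQ c n - convP c n * convQ c (n + 2) := by
    exact_mod_cast (convP_add_two_mul_convQ_sub c n).symm
  rw [hdet, div_sub_div _ _ (convQ_cast_pos hc _).ne' (convQ_cast_pos hc _).ne']
  ring

variable {γ : ℝ}
  (htend : Tendsto (fun n => (convP c n : ℝ) / convQ c n) atTop (𝓝 γ))
include htend

lemma convergent_two_mul_lt (k : ℕ) : (convP c (2 * k) : ℝ) / convQ c (2 * k) < γ := by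
  have hmono : StrictMono fun k => (convP c (2 * k) : ℝ) / convQ c (2 * k) := by
    refine strictMono_nat_of_lt_succ fun k => sub_pos.mp ?_
    rw [show 2 * (k + 1) = 2 * k + 2 by ring, convergent_add_two_sub hc, pow_mul, neg_one_sq,
      one_pow, mul_one]
    have := hc (2 * k + 2) (by omega)
    have := convQ_cast_pos hc (2 * k)
    have := convQ_cast_pos hc (2 * k + 2)
    positivity
  have hsub := htend.comp (strictMono_mul_left_of_pos two_pos).tendsto_atTop
  exact (hmono k.lt_succ_self).trans_le (hmono.monotone.ge_of_tendsto hsub _)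

lemma lt_convergent_two_mul_add_one (k : ℕ) :
    γ < (convP c (2 * k + 1) : ℝ) / convQ c (2 * k + 1) := by
  have hanti : StrictAnti fun k => (convP c (2 * k + 1) : ℝ) / convQ c (2 * k + 1) := by
    refine strictAnti_nat_of_succ_lt fun k => sub_neg.mp ?_
    rw [show 2 * (k + 1) + 1 = 2 * k + 1 + 2 by ring, convergent_add_two_sub hc, pow_succ,
      pow_mul, neg_one_sq, one_pow, one_mul, mul_neg_one, neg_div]
    have := hc (2 * k + 1 + 2) (by omega)
    have := convQ_cast_pos hc (2 * k + 1)
    have := convQ_cast_pos hc (2 * k + 1 + 2)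
    exact neg_neg_of_pos (by positivity)
  have hsub := htend.comp (strictMono_mul_left_of_pos two_pos |>.add_const 1).tendsto_atTop
  exact (hanti.antitone.le_of_tendsto hsub _).trans_lt (hanti k.lt_succ_self)

end Convergents

theorem stmt_14_general (γ : ℝ) (c : ℕ → ℤ) (hcf : IsCF γ c)
    (heven : ∀ n, 1 ≤ n → c (2 * n) = 1)
    (m : ℕ) (hm : 0 < m)
    (hnotconv : ∀ n : ℕ,
      (⌊(m : ℝ) * γ⌋ : ℝ) / (m : ℝ) ≠ (convP c n : ℝ) / (convQ c n : ℝ)) :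
    (m : ℝ) * ((m : ℝ) * γ - (⌊(m : ℝ) * γ⌋ : ℝ)) > 1 := by
  obtain ⟨hc, htend⟩ := hcf
  obtain ⟨k, hk₀, hk₁⟩ : ∃ k, convQ c (2 * k) ≤ m ∧ (m : ℤ) < convQ c (2 * (k + 1)) := by
    refine exists_le_lt_succ (f := fun k => convQ c (2 * k)) (N := m + 1)
      (by simp [convQ]; omega) ?_
    have := le_convQ hc (2 * (m + 1))
    push_cast at this
    omega
  have hQ : convQ c (2 * (k + 1)) = convQ c (2 * k) + convQ c (2 * k + 1) := by
    rw [show 2 * (k + 1) = 2 * k + 2 by ring, convQ, ← show 2 * (k + 1) = 2 * k + 2 by ring,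
      heven (k + 1) (by omega), one_mul, add_comm]
  have hdet := convP_succ_mul_convQ_sub c (2 * k)
  rw [pow_mul, neg_one_sq, one_pow] at hdet
  have h₀ := convergent_two_mul_lt hc htend k
  have h₁ := lt_convergent_two_mul_add_one hc htend k
  rw [div_lt_iff₀ (convQ_cast_pos hc _), mul_comm γ] at h₀
  rw [lt_div_iff₀ (convQ_cast_pos hc _), mul_comm γ] at h₁
  have hne : ⌊(m : ℝ) * γ⌋ * convQ c (2 * k) ≠ convP c (2 * k) * m := fun h =>
    hnotconv (2 * k) <| (div_eq_div_iff (by positivity) (convQ_cast_pos hc _).ne').mpr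
      (by exact_mod_cast h)
  have := one_lt_mul_mul_sub_of_det_eq_one hdet (one_le_convQ hc _)
    (zero_le_one.trans (one_le_convQ hc _)) h₀ h₁ hk₀ (hQ ▸ hk₁)
    (by exact_mod_cast Int.floor_le ((m : ℝ) * γ)) hne
  exact_mod_cast this

theorem stmt_14 (γ : ℝ) (hγ : Irrational γ) (c : ℕ → ℤ) (hcf : IsCF γ c)
    (hc0 : c 0 = 0) (hc1 : c 1 = 1)
    (heven : ∀ n, 1 ≤ n → c (2 * n) = 1)
    (hodd : ∀ n, 1 ≤ n → c (2 * n + 1) = 1 ∨ c (2 * n + 1) = 2)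
    (m : ℕ) (hm : 0 < m)
    (hnotconv : ∀ n : ℕ,
      (⌊(m : ℝ) * γ⌋ : ℝ) / (m : ℝ) ≠ (convP c n : ℝ) / (convQ c n : ℝ)) :
    (m : ℝ) * ((m : ℝ) * γ - (⌊(m : ℝ) * γ⌋ : ℝ)) > 1 :=
  stmt_14_general γ c hcf heven m hm hnotconv
end

section
/- Let γ = [0; 1, 1, c_3, 1, c_5, 1, c_7, …] be irrational with c_{2n} = 1 for all n, c_1 = 1, and c_{2n+1} ∈ {1,2} for n ≥ 1. If m = q_{2n} (the denominator of the 2n-th convergent) and c_{2n+1} = 1, then m(mγ - ⌊mγ⌋) > 2/5. -/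
lemma convP_add2 (c : ℕ → ℤ) (k : ℕ) :
    convP c (k+2) = c (k+2) * convP c (k+1) + convP c k := rfl

lemma convQ_add2 (c : ℕ → ℤ) (k : ℕ) :
    convQ c (k+2) = c (k+2) * convQ c (k+1) + convQ c k := rfl

lemma auxQ1 (c : ℕ → ℤ) (hc : ∀ n, 1 ≤ n → 1 ≤ c n) : ∀ k, 1 ≤ convQ c k
  | 0 => by simp [convQ]
  | 1 => by simpa [convQ] using hc 1 le_rfl
  | (k+2) => by
      have h1 := auxQ1 c hc (k+1)
      have h0 := auxQ1 c hc k
      have h2 := hc (k+2) (by omega)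
      simp only [convQ]
      nlinarith

lemma auxQlt (c : ℕ → ℤ) (hc : ∀ n, 1 ≤ n → 1 ≤ c n) (k : ℕ) :
    convQ c (k+1) < convQ c (k+2) := by
  have h1 := auxQ1 c hc (k+1)
  have h0 := auxQ1 c hc k
  have h2 := hc (k+2) (by omega)
  rw [convQ_add2]
  nlinarith

lemma auxDet (c : ℕ → ℤ) : ∀ k,
    convP c (k+1) * convQ c k - convP c k * convQ c (k+1) = (-1)^k
  | 0 => by simp [convP, convQ]; ring
  | (k+1) => by
      have ih := auxDet c k
      show convP c (k+2) * convQ c (k+1) - convP c (k+1) * convQ c (k+2) = _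
      rw [convP_add2, convQ_add2, pow_succ]
      linear_combination (-1 : ℤ) * ih

lemma auxDet2 (c : ℕ → ℤ) (k : ℕ) :
    convP c (k+2) * convQ c k - convP c k * convQ c (k+2) = (-1)^k * c (k+2) := by
  have ih := auxDet c k
  rw [convP_add2, convQ_add2]
  linear_combination c (k+2) * ih

set_option maxHeartbeats 1600000

theorem stmt_15 (γ : ℝ) (hγ : Irrational γ) (c : ℕ → ℤ) (hcf : IsCF γ c)
    (hc0 : c 0 = 0) (hc1 : c 1 = 1)
    (heven : ∀ n, 1 ≤ n → c (2 * n) = 1)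
    (hodd : ∀ n, 1 ≤ n → c (2 * n + 1) = 1 ∨ c (2 * n + 1) = 2)
    (n : ℕ) (hn : 1 ≤ n) (hc : c (2 * n + 1) = 1)
    (m : ℝ) (hm : m = (convQ c (2 * n) : ℝ)) :
    m * (m * γ - (⌊m * γ⌋ : ℝ)) > 2 / 5 := by
  obtain ⟨hpos, htend⟩ := hcf
  have hQ1 := auxQ1 c hpos
  have hQpos : ∀ k, (0:ℝ) < (convQ c k : ℝ) := by
    intro k; exact_mod_cast lt_of_lt_of_le one_pos (hQ1 k)
  -- even convergents strictly increase
  have hfe_mono : StrictMono (fun k => (convP c (2*k) : ℝ) / (convQ c (2*k) : ℝ)) := by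
    apply strictMono_nat_of_lt_succ
    intro k
    show (convP c (2*k):ℝ)/(convQ c (2*k):ℝ) < (convP c (2*(k+1)):ℝ)/(convQ c (2*(k+1)):ℝ)
    rw [show 2*(k+1) = 2*k+2 by ring, div_lt_div_iff₀ (hQpos _) (hQpos _)]
    have hd := auxDet2 c (2*k)
    have he : (-1:ℤ)^(2*k) = 1 := by rw [pow_mul]; norm_num
    have hc2 : 1 ≤ c (2*k+2) := hpos _ (by omega)
    have : convP c (2*k) * convQ c (2*k+2) < convP c (2*k+2) * convQ c (2*k) := by
      rw [he] at hd; linarith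
    exact_mod_cast this
  -- odd convergents strictly decrease
  have hfo_anti : StrictAnti (fun k => (convP c (2*k+1) : ℝ) / (convQ c (2*k+1) : ℝ)) := by
    apply strictAnti_nat_of_succ_lt
    intro k
    show (convP c (2*(k+1)+1):ℝ)/(convQ c (2*(k+1)+1):ℝ) < (convP c (2*k+1):ℝ)/(convQ c (2*k+1):ℝ)
    rw [show 2*(k+1)+1 = 2*k+3 by ring, div_lt_div_iff₀ (hQpos _) (hQpos _)]
    have hd := auxDet2 c (2*k+1)
    have he : (-1:ℤ)^(2*k+1) = -1 := by rw [pow_succ, pow_mul]; norm_num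
    have hc2 : 1 ≤ c (2*k+3) := hpos _ (by omega)
    have : convP c (2*k+3) * convQ c (2*k+1) < convP c (2*k+1) * convQ c (2*k+3) := by
      rw [he] at hd; linarith
    exact_mod_cast this
  have hte : Filter.Tendsto (fun k => (convP c (2*k) : ℝ) / (convQ c (2*k) : ℝ))
      Filter.atTop (nhds γ) := by
    apply htend.comp
    exact StrictMono.tendsto_atTop (by intro a b h; show 2*a < 2*b; omega)
  have hto : Filter.Tendsto (fun k => (convP c (2*k+1) : ℝ) / (convQ c (2*k+1) : ℝ))
      Filter.atTop (nhds γ) := by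
    apply htend.comp
    exact StrictMono.tendsto_atTop (by intro a b h; show 2*a+1 < 2*b+1; omega)
  have hge : ∀ k, (convP c (2*k) : ℝ) / (convQ c (2*k) : ℝ) ≤ γ :=
    fun k => hfe_mono.monotone.ge_of_tendsto hte k
  have hgt : ∀ k, (convP c (2*k) : ℝ) / (convQ c (2*k) : ℝ) < γ :=
    fun k => lt_of_lt_of_le (hfe_mono (Nat.lt_succ_self k)) (hge (k+1))
  have hle : ∀ k, γ ≤ (convP c (2*k+1) : ℝ) / (convQ c (2*k+1) : ℝ) :=
    fun k => hfo_anti.antitone.le_of_tendsto hto k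
  obtain ⟨k, rfl⟩ : ∃ k, n = k + 1 := ⟨n-1, by omega⟩
  -- notation
  set a := convQ c (2*k+2) with ha
  set b := convQ c (2*k+1) with hb
  set p := convP c (2*k+2) with hp
  -- partial quotient values
  have hc2 : c (2*k+2) = 1 := by have := heven (k+1) (by omega); rwa [show 2*(k+1) = 2*k+2 by ring] at this
  have hc3 : c (2*k+3) = 1 := by rwa [show 2*(k+1)+1 = 2*k+3 by ring] at hc
  have hc4 : c (2*k+4) = 1 := by have := heven (k+2) (by omega); rwa [show 2*(k+2) = 2*k+4 by ring] at this
  have hc5 : c (2*k+5) = 1 ∨ c (2*k+5) = 2 := by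
    have := hodd (k+2) (by omega); rwa [show 2*(k+2)+1 = 2*k+5 by ring] at this
  have hc6 : c (2*k+6) = 1 := by have := heven (k+3) (by omega); rwa [show 2*(k+3) = 2*k+6 by ring] at this
  -- denominators
  have hb1 : 1 ≤ b := hQ1 _
  have ha1 : 1 ≤ a := hQ1 _
  have hQ3 : convQ c (2*k+3) = a + b := by
    rw [show 2*k+3 = (2*k+1)+2 by omega, convQ_add2]
    rw [show (2*k+1)+2 = 2*k+3 by omega, hc3]; ring
  have hQ4 : convQ c (2*k+4) = 2*a + b := by
    rw [show 2*k+4 = (2*k+2)+2 by omega, convQ_add2]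
    rw [show (2*k+2)+2 = 2*k+4 by omega, hc4, hQ3]; ring
  set c5 := c (2*k+5) with hc5def
  have hQ5 : convQ c (2*k+5) = c5*(2*a+b) + (a+b) := by
    rw [show 2*k+5 = (2*k+3)+2 by omega, convQ_add2]
    rw [show (2*k+3)+2 = 2*k+5 by omega, hQ3, hQ4]
  have hQ6 : convQ c (2*k+6) = (2*c5+3)*a + (c5+2)*b := by
    rw [show 2*k+6 = (2*k+4)+2 by omega, convQ_add2]
    rw [show (2*k+4)+2 = 2*k+6 by omega, hc6, hQ5, hQ4]; ring
  -- determinant identities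
  have heven2 : (-1:ℤ)^(2*k+2) = 1 := by rw [pow_add, pow_mul]; norm_num
  have hdd : convP c (2*k+3) * a - p * convQ c (2*k+3) = 1 := by
    have := auxDet c (2*k+2)
    rwa [show 2*k+2+1 = 2*k+3 by omega, heven2] at this
  have hA : convP c (2*k+4) * a - p * convQ c (2*k+4) = 1 := by
    have := auxDet2 c (2*k+2)
    rwa [show 2*k+2+2 = 2*k+4 by omega, heven2, hc4, mul_one] at this
  have hB : convP c (2*k+5) * a - p * convQ c (2*k+5) = c5 + 1 := by
    rw [show 2*k+5 = (2*k+3)+2 by omega, convP_add2, convQ_add2]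
    rw [show (2*k+3)+2 = 2*k+5 by omega, show (2*k+3)+1 = 2*k+4 by omega, ← hc5def]
    linear_combination c5 * hA + hdd
  have hD : convP c (2*k+6) * a - p * convQ c (2*k+6) = c5 + 2 := by
    rw [show 2*k+6 = (2*k+4)+2 by omega, convP_add2, convQ_add2]
    rw [show (2*k+4)+2 = 2*k+6 by omega, show (2*k+4)+1 = 2*k+5 by omega, hc6]
    linear_combination hB + hA
  -- key size estimate: 3a ≥ 4b + 1
  have hkey : 4*b + 1 ≤ 3*a := by
    have haeq : a = b + convQ c (2*k) := by
      rw [ha, convQ_add2, hc2, one_mul, ← hb]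
    rcases Nat.eq_zero_or_pos k with hk0 | hk1
    · subst hk0
      have hb' : b = 1 := by rw [hb]; show convQ c 1 = 1; simp [convQ, hc1]
      have hq0 : convQ c 0 = 1 := rfl
      rw [haeq]; simp at hq0 ⊢; omega
    · obtain ⟨j, rfl⟩ : ∃ j, k = j + 1 := ⟨k-1, by omega⟩
      have hbeq : b = c (2*j+3) * convQ c (2*j+2) + convQ c (2*j+1) := by
        rw [hb, show 2*(j+1)+1 = (2*j+1)+2 by omega, convQ_add2,
          show (2*j+1)+2 = 2*j+3 by omega, show (2*j+1)+1 = 2*j+2 by omega]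
      have hco : c (2*j+3) ≤ 2 := by
        have := hodd (j+1) (by omega)
        rw [show 2*(j+1)+1 = 2*j+3 by omega] at this
        omega
      have hlt : convQ c (2*j+1) < convQ c (2*j+2) := by
        have := auxQlt c hpos (2*j)
        rwa [show 2*j+2 = (2*j)+2 by omega] at this
      have hQ2k : convQ c (2*(j+1)) = convQ c (2*j+2) := by
        rw [show 2*(j+1) = 2*j+2 by omega]
      have hq1 : 1 ≤ convQ c (2*j+2) := hQ1 _
      have hq2 : 1 ≤ convQ c (2*j+1) := hQ1 _
      have hc3' : 1 ≤ c (2*j+3) := hpos _ (by omega)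
      rw [haeq, hQ2k, hbeq]
      nlinarith
  -- the index 2*(k+1) = 2*k+2
  have hidx : 2*(k+1) = 2*k+2 := by ring
  rw [hidx] at hm
  -- floor computation
  have hapos : (0:ℝ) < (a:ℝ) := hQpos _
  have hlow : (p:ℝ)/(a:ℝ) < γ := by
    have := hgt (k+1); rwa [hidx] at this
  have hploww : (p:ℝ) < (a:ℝ) * γ := by
    rw [div_lt_iff₀ hapos] at hlow; linarith [hlow]
  have hupp : (a:ℝ) * γ < (p:ℝ) + 1 := by
    have h1 := hle (k+1)
    rw [show 2*(k+1)+1 = 2*k+3 by ring] at h1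
    have hQ3pos : (0:ℝ) < (convQ c (2*k+3) : ℝ) := hQpos _
    have hQ3ge : (2:ℝ) ≤ (convQ c (2*k+3) : ℝ) := by
      rw [hQ3]; push_cast; exact_mod_cast by omega
    have h2 : (a:ℝ) * γ ≤ (a:ℝ) * ((convP c (2*k+3):ℝ) / (convQ c (2*k+3):ℝ)) := by
      apply mul_le_mul_of_nonneg_left h1 (le_of_lt hapos)
    have h3 : (a:ℝ) * ((convP c (2*k+3):ℝ) / (convQ c (2*k+3):ℝ))
        = (p:ℝ) + 1 / (convQ c (2*k+3):ℝ) := by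
      field_simp
      have : (convP c (2*k+3) : ℝ) * a = p * (convQ c (2*k+3):ℝ) + 1 := by
        exact_mod_cast congrArg (Int.cast : ℤ → ℝ) (by linarith [hdd] : convP c (2*k+3) * a = p * convQ c (2*k+3) + 1)
      linarith [this]
    have h4 : 1 / (convQ c (2*k+3):ℝ) ≤ 1/2 := by
      apply one_div_le_one_div_of_le; norm_num; exact hQ3ge
    linarith
  have hfloor : ⌊m * γ⌋ = p := by
    rw [hm, Int.floor_eq_iff]
    constructor
    · exact le_of_lt hploww
    · push_cast; linarith
  rw [hfloor, hm]
  -- final inequality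
  have hγ6 : (convP c (2*k+6):ℝ) / (convQ c (2*k+6):ℝ) < γ := by
    have := hgt (k+3); rwa [show 2*(k+3) = 2*k+6 by ring] at this
  have hQ6pos : (0:ℝ) < (convQ c (2*k+6):ℝ) := hQpos _
  have hcast : (convP c (2*k+6):ℝ) * (a:ℝ) - (p:ℝ) * (convQ c (2*k+6):ℝ) = (c5:ℝ) + 2 := by
    exact_mod_cast congrArg (Int.cast : ℤ → ℝ) hD
  have hP6lt : (convP c (2*k+6):ℝ) < γ * (convQ c (2*k+6):ℝ) := by
    rwa [div_lt_iff₀ hQ6pos] at hγ6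
  have hint : (2:ℝ) * (convQ c (2*k+6):ℝ) < (a:ℝ) * ((c5:ℝ)+2) * 5 := by
    have h5 : 2 * convQ c (2*k+6) < a * (c5+2) * 5 := by
      rw [hQ6]
      rcases hc5 with h | h <;> rw [h] <;> linarith [hkey, hb1]
    exact_mod_cast h5
  have haa : (0:ℝ) < (a:ℝ)*(a:ℝ) := by positivity
  have hmul := mul_lt_mul_of_pos_left hP6lt haa
  have hacast : (a:ℝ) * ((convP c (2*k+6):ℝ) * (a:ℝ) - (p:ℝ) * (convQ c (2*k+6):ℝ))
      = (a:ℝ) * ((c5:ℝ) + 2) := by rw [hcast]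
  have h1 : (a:ℝ) * ((c5:ℝ)+2) < (a:ℝ)*((a:ℝ)*γ - (p:ℝ)) * (convQ c (2*k+6):ℝ) := by
    nlinarith [hmul, hacast]
  show 2/5 < (a:ℝ)*((a:ℝ)*γ - (p:ℝ))
  nlinarith [h1, hint, hQ6pos]
end
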